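/- arXiv:2502.16293 — 2 statements merged into one kernel-verified Lean document; each statement's English description precedes it below -/
import Mathlib

section
/- Let P = P^j − P^i be the Minkowski difference of two nonempty compact convex sets, and let A^i_k be an outer normal of a facet-defining halfspace P^i_k ⊇ P^i with h_{P^i}(A^i_k) = b^i_k. Then the support halfspace of P in direction −A^i_k satisfies H^−_P(−A^i_k) = P^j − P^i_k, where H^−_P(a) := {ω : a^⊤ω ≤ h_P(a)}. -/
open Pointwise
open scoped RealInnerProductSpace

/-!
Since `P^i` and `P^j` are compact, `⟪A, ·⟫` attains its maximum `M = b` on `P^i` and its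
minimum `m` on `P^j`. Both sides of the identity are then the halfspace `{ω | m - M ≤ ⟪A, ω⟫}`:
the support value of `P^j - P^i` in direction `-A` is `M - m`, and subtracting the halfspace
`{⟪A, ·⟫ ≤ M}` from `P^j` sweeps out exactly the points with `⟪A, ω⟫ ≥ m - M`, the bound being
attained through a minimiser of `⟪A, ·⟫` on `P^j`.
-/

section InnerProductSpace

variable {E : Type*} [NormedAddCommGroup E] [InnerProductSpace ℝ E] {a : E} {s t : Set E}
  {M m : ℝ}

theorem isGreatest_image_inner_neg_sub (hs : IsGreatest ((⟪a, ·⟫) '' s) M)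
    (ht : IsLeast ((⟪a, ·⟫) '' t) m) : IsGreatest ((⟪-a, ·⟫) '' (t - s)) (M - m) := by
  obtain ⟨⟨x₀, hx₀, rfl⟩, hs_le⟩ := hs
  obtain ⟨⟨y₀, hy₀, rfl⟩, ht_ge⟩ := ht
  refine ⟨⟨y₀ - x₀, Set.sub_mem_sub hy₀ hx₀, ?_⟩, ?_⟩
  · simp only [inner_neg_left, inner_sub_right]
    ring
  · rintro _ ⟨_, ⟨y, hy, x, hx, rfl⟩, rfl⟩
    have hx_le : ⟪a, x⟫ ≤ ⟪a, x₀⟫ := hs_le ⟨x, hx, rfl⟩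
    have hy_ge : ⟪a, y₀⟫ ≤ ⟪a, y⟫ := ht_ge ⟨y, hy, rfl⟩
    simp only [inner_neg_left, inner_sub_right]
    linarith

theorem sub_setOf_inner_le_eq (ht : IsLeast ((⟪a, ·⟫) '' t) m) (b : ℝ) :
    t - {z | ⟪a, z⟫ ≤ b} = {ω | m - b ≤ ⟪a, ω⟫} := by
  obtain ⟨⟨y₀, hy₀, rfl⟩, ht_ge⟩ := ht
  ext ω
  constructor
  · rintro ⟨y, hy, z, hz, rfl⟩
    have hy_ge : ⟪a, y₀⟫ ≤ ⟪a, y⟫ := ht_ge ⟨y, hy, rfl⟩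
    have hz_le : ⟪a, z⟫ ≤ b := hz
    simp only [Set.mem_ofPred_eq, inner_sub_right]
    linarith
  · intro hω
    refine ⟨y₀, hy₀, y₀ - ω, ?_, sub_sub_cancel y₀ ω⟩
    simp only [Set.mem_ofPred_eq, inner_sub_right] at hω ⊢
    linarith

end InnerProductSpace

theorem support_halfspace_eq_minkowski_diff_general {n : ℕ}
    (Pi Pj : Set (EuclideanSpace ℝ (Fin n)))
    (hni : Pi.Nonempty) (hnj : Pj.Nonempty)
    (hki : IsCompact Pi) (hkj : IsCompact Pj)
    (Aik : EuclideanSpace ℝ (Fin n)) (bik : ℝ)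
    (hb : bik = sSup ((fun ω => ⟪Aik, ω⟫) '' Pi)) :
    {ω : EuclideanSpace ℝ (Fin n) |
        ⟪-Aik, ω⟫ ≤ sSup ((fun ω' => ⟪-Aik, ω'⟫) '' (Pj - Pi))} =
      Pj - {z : EuclideanSpace ℝ (Fin n) | ⟪Aik, z⟫ ≤ bik} := by
  have hcont : Continuous (⟪Aik, ·⟫) := continuous_const.inner continuous_id
  obtain ⟨M, hM⟩ := (hki.image hcont).exists_isGreatest (hni.image _)
  obtain ⟨m, hm⟩ := (hkj.image hcont).exists_isLeast (hnj.image _)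
  have hbM : bik = M := hb.trans hM.csSup_eq
  rw [(isGreatest_image_inner_neg_sub hM hm).csSup_eq, sub_setOf_inner_le_eq hm, hbM]
  ext ω
  simp only [Set.mem_ofPred_eq, inner_neg_left]
  constructor <;> intro h <;> linarith

theorem support_halfspace_eq_minkowski_diff {n : ℕ}
    (Pi Pj : Set (EuclideanSpace ℝ (Fin n)))
    (hni : Pi.Nonempty) (hnj : Pj.Nonempty)
    (hki : IsCompact Pi) (hkj : IsCompact Pj)
    (hci : Convex ℝ Pi) (hcj : Convex ℝ Pj)
    (Aik : EuclideanSpace ℝ (Fin n)) (bik : ℝ)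
    (hA : ‖Aik‖ = 1) (hb : bik = sSup ((fun ω => ⟪Aik, ω⟫) '' Pi)) :
    {ω : EuclideanSpace ℝ (Fin n) |
        ⟪-Aik, ω⟫ ≤ sSup ((fun ω' => ⟪-Aik, ω'⟫) '' (Pj - Pi))} =
      Pj - {z : EuclideanSpace ℝ (Fin n) | ⟪Aik, z⟫ ≤ bik} :=
  support_halfspace_eq_minkowski_diff_general Pi Pj hni hnj hki hkj Aik bik hb
end

section
/- Two-layer log-sum-exp approximation error: let h(x) = max_{k∈[p]} min_{l∈[q]} f_{k,l}(x) and define ĥ(x; b, κ) := (1/κ)·ln( Σ_{k∈[p]} 1 / (Σ_{l∈[q]} exp(−κ f_{k,l}(x))) ) − b/κ for κ > 0. Then h(x) − (ln q + b)/κ ≤ ĥ(x; b, κ) ≤ h(x) + (ln p − b)/κ for all x. In particular, if b ≥ ln p then ĥ(x; b, κ) ≤ h(x), and for fixed b, ĥ(x; b, κ) → h(x) as κ → ∞. -/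
/-!
Writing `1 / ∑ₗ exp (-κ f k l) = exp (-log ∑ₗ exp (-κ f k l))`, the quantity `κ ĥ + b` is a
log-sum-exp over `k` of negated log-sum-exps over `l`. A log-sum-exp of `N` terms lies between
their maximum and the maximum plus `log N`, so the inner layer approximates `κ minₗ f k l` from
below within `log q` and the outer layer approximates the maximum over `k` from above within
`log p`. Dividing by `κ` gives the error bounds, and the limit follows by squeezing.
-/

open Finset Real Filter Topology

section LogSumExp

variable {ι : Type*} {s : Finset ι} {g : ι → ℝ}

theorem le_log_sum_exp {i : ι} (hi : i ∈ s) : g i ≤ log (∑ j ∈ s, exp (g j)) := by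
  rw [le_log_iff_exp_le (sum_pos (fun j _ => exp_pos (g j)) ⟨i, hi⟩)]
  exact single_le_sum (fun j _ => (exp_pos (g j)).le) hi

theorem log_sum_exp_le {M : ℝ} (hs : s.Nonempty) (hg : ∀ i ∈ s, g i ≤ M) :
    log (∑ i ∈ s, exp (g i)) ≤ M + log #s := by
  have hcard : (0 : ℝ) < #s := by exact_mod_cast hs.card_pos
  calc log (∑ i ∈ s, exp (g i))
      ≤ log (#s * exp M) := by
        refine log_le_log (sum_pos (fun i _ => exp_pos (g i)) hs) ?_
        simpa using sum_le_card_nsmul s _ _ fun i hi => exp_le_exp.2 (hg i hi)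
    _ = M + log #s := by rw [log_mul hcard.ne' (exp_pos M).ne', log_exp, add_comm]

end LogSumExp

section SoftMin

variable {ι : Type*} {s : Finset ι} {κ : ℝ}

theorem neg_log_sum_exp_neg_mul_le_mul_inf' (hs : s.Nonempty) (g : ι → ℝ) :
    -log (∑ i ∈ s, exp (-κ * g i)) ≤ κ * s.inf' hs g := by
  obtain ⟨i, hi, hmin⟩ := s.exists_mem_eq_inf' hs g
  have := le_log_sum_exp (g := fun j => -κ * g j) hi
  rw [hmin]
  linarith

theorem mul_inf'_sub_log_card_le_neg_log_sum_exp_neg_mul (hκ : 0 ≤ κ) (hs : s.Nonempty)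
    (g : ι → ℝ) :
    κ * s.inf' hs g - log #s ≤ -log (∑ i ∈ s, exp (-κ * g i)) := by
  have := log_sum_exp_le (g := fun j => -κ * g j) (M := -κ * s.inf' hs g) hs fun i hi => by
    have := mul_le_mul_of_nonneg_left (inf'_le g hi) hκ
    linarith
  linarith

end SoftMin

theorem tendsto_atTop_of_sub_div_le_of_le_add_div {u : ℝ → ℝ} {a c d : ℝ}
    (h : ∀ κ > 0, a - c / κ ≤ u κ ∧ u κ ≤ a + d / κ) : Tendsto u atTop (𝓝 a) := by
  have hdiv (e : ℝ) : Tendsto (fun κ : ℝ => e / κ) atTop (𝓝 0) :=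
    tendsto_const_nhds.div_atTop tendsto_id
  have hc := (tendsto_const_nhds (x := a)).sub (hdiv c)
  have hd := (tendsto_const_nhds (x := a)).add (hdiv d)
  rw [sub_zero] at hc
  rw [add_zero] at hd
  refine tendsto_of_tendsto_of_tendsto_of_le_of_le' hc hd ?_ ?_ <;>
    filter_upwards [eventually_gt_atTop 0] with κ hκ
  exacts [(h κ hκ).1, (h κ hκ).2]

section TwoLayer

variable {ι ι' : Type*} {s : Finset ι} {t : Finset ι'} {κ : ℝ}

theorem sum_inv_sum_exp_eq_sum_exp_neg_log (F : ι → ι' → ℝ) (ht : t.Nonempty) :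
    ∑ k ∈ s, 1 / ∑ l ∈ t, exp (-κ * F k l) =
      ∑ k ∈ s, exp (-log (∑ l ∈ t, exp (-κ * F k l))) := by
  refine sum_congr rfl fun k _ => ?_
  rw [exp_neg, exp_log (sum_pos (fun l _ => exp_pos _) ht), one_div]

theorem mul_sup'_inf'_sub_log_card_le_log_sum_inv_sum_exp (hκ : 0 ≤ κ) (hs : s.Nonempty)
    (ht : t.Nonempty) (F : ι → ι' → ℝ) :
    κ * s.sup' hs (fun k => t.inf' ht (F k)) - log #t ≤
      log (∑ k ∈ s, 1 / ∑ l ∈ t, exp (-κ * F k l)) := by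
  obtain ⟨k, hk, hmax⟩ := s.exists_mem_eq_sup' hs fun k => t.inf' ht (F k)
  rw [sum_inv_sum_exp_eq_sum_exp_neg_log F ht, hmax]
  exact (mul_inf'_sub_log_card_le_neg_log_sum_exp_neg_mul hκ ht (F k)).trans
    (le_log_sum_exp (g := fun k => -log (∑ l ∈ t, exp (-κ * F k l))) hk)

theorem log_sum_inv_sum_exp_le_mul_sup'_inf'_add_log_card (hκ : 0 ≤ κ) (hs : s.Nonempty)
    (ht : t.Nonempty) (F : ι → ι' → ℝ) :
    log (∑ k ∈ s, 1 / ∑ l ∈ t, exp (-κ * F k l)) ≤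
      κ * s.sup' hs (fun k => t.inf' ht (F k)) + log #s := by
  rw [sum_inv_sum_exp_eq_sum_exp_neg_log F ht]
  refine log_sum_exp_le hs fun k hk => ?_
  exact (neg_log_sum_exp_neg_mul_le_mul_inf' ht (F k)).trans
    (mul_le_mul_of_nonneg_left (le_sup' (fun k => t.inf' ht (F k)) hk) hκ)

end TwoLayer

theorem two_layer_log_sum_exp_approx {n p q : ℕ} (hp : 0 < p) (hq : 0 < q)
    (f : Fin p → Fin q → EuclideanSpace ℝ (Fin n) → ℝ) (b : ℝ) :
    let h : EuclideanSpace ℝ (Fin n) → ℝ := fun x =>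
      Finset.univ.sup' ⟨⟨0, hp⟩, Finset.mem_univ _⟩ fun k =>
        Finset.univ.inf' ⟨⟨0, hq⟩, Finset.mem_univ _⟩ fun l => f k l x
    let hhat : ℝ → EuclideanSpace ℝ (Fin n) → ℝ := fun κ x =>
      (1 / κ) * Real.log (∑ k, 1 / ∑ l, Real.exp (-κ * f k l x)) - b / κ
    (∀ κ > 0, ∀ x, h x - (Real.log q + b) / κ ≤ hhat κ x ∧
        hhat κ x ≤ h x + (Real.log p - b) / κ) ∧
      (Real.log p ≤ b → ∀ κ > 0, ∀ x, hhat κ x ≤ h x) ∧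
      (∀ x, Filter.Tendsto (fun κ => hhat κ x) Filter.atTop (nhds (h x))) := by
  intro h hhat
  have bounds (κ : ℝ) (hκ : 0 < κ) (x : EuclideanSpace ℝ (Fin n)) :
      h x - (log q + b) / κ ≤ hhat κ x ∧ hhat κ x ≤ h x + (log p - b) / κ := by
    have lower := mul_sup'_inf'_sub_log_card_le_log_sum_inv_sum_exp hκ.le
      ⟨⟨0, hp⟩, mem_univ _⟩ ⟨⟨0, hq⟩, mem_univ _⟩ fun k l => f k l x
    have upper := log_sum_inv_sum_exp_le_mul_sup'_inf'_add_log_card hκ.le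
      ⟨⟨0, hp⟩, mem_univ _⟩ ⟨⟨0, hq⟩, mem_univ _⟩ fun k l => f k l x
    rw [card_univ, Fintype.card_fin] at lower upper
    set L := log (∑ k, 1 / ∑ l, exp (-κ * f k l x))
    have hdiff : hhat κ x - h x = (L - κ * h x - b) / κ := by
      change 1 / κ * L - b / κ - h x = _
      field_simp
      ring
    have hlo : -((log q + b) / κ) ≤ (L - κ * h x - b) / κ := by
      rw [← neg_div]
      exact div_le_div_of_nonneg_right (by linarith) hκ.le
    have hup : (L - κ * h x - b) / κ ≤ (log p - b) / κ :=
      div_le_div_of_nonneg_right (by linarith) hκ.le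
    constructor <;> linarith
  refine ⟨bounds, fun hb κ hκ x => ?_, fun x => ?_⟩
  · have := div_nonpos_of_nonpos_of_nonneg (sub_nonpos.2 hb) hκ.le
    linarith [bounds κ hκ x]
  · exact tendsto_atTop_of_sub_div_le_of_le_add_div fun κ hκ => bounds κ hκ x
end
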